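/- arXiv:2201.01454 — 2 statements merged into one kernel-verified Lean document; each statement's English description precedes it below -/
import Mathlib

section
/- Let E be a finite-dimensional real inner product space, K ⊆ E a nonempty closed convex set, and F : E → E continuous and pseudomonotone on K. If there exists x̂ ∈ K such that the set L≤ = {x ∈ K | ⟪F x, x − x̂⟫ ≤ 0} is bounded, then the solution set SOL(K, F) = {x ∈ K | ⟪F x, y − x⟫ ≥ 0 for all y ∈ K} is nonempty and compact. -/
/-!
For a finite set `t ⊆ K`, pseudomonotonicity makes the half-spaces `{x | ⟪F y, y - x⟫ ≥ 0}`
(`y ∈ t`) cover `conv t`, so by Berge's intersection theorem and induction on `t` they have a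
common point in `conv t`. By compactness the Minty problem `⟪F y, y - x⟫ ≥ 0 ∀ y` then has a
solution on `C = K ∩ closedBall x₀ (r + 1)`, and by continuity of `F` it solves the variational
inequality on `C`. Testing it against `x₀` puts it in the sublevel set, which lies in
`closedBall x₀ r`; so the ball constraint is inactive and, `K` being convex, it solves the
problem on all of `K`. `SOL(K, F)` is closed and lies in the bounded sublevel set.
-/

open RealInnerProductSpace Set Filter Topology

section Berge

variable {E : Type*} [AddCommGroup E] [Module ℝ E] [TopologicalSpace E] [IsTopologicalAddGroup E]
  [ContinuousSMul ℝ E] [LocallyConvexSpace ℝ E] [T2Space E]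

theorem nonempty_biInter_of_convex_biUnion {ι : Type*} [DecidableEq ι] (s : Finset ι)
    (C : ι → Set E) (hconv : ∀ i ∈ s, Convex ℝ (C i)) (hcomp : ∀ i ∈ s, IsCompact (C i))
    (hU : Convex ℝ (⋃ i ∈ s, C i)) (hUne : (⋃ i ∈ s, C i).Nonempty)
    (hdrop : ∀ k ∈ s, (⋂ i ∈ s.erase k, C i).Nonempty) :
    (⋂ i ∈ s, C i).Nonempty := by
  induction s using Finset.induction_on generalizing C with
  | empty => simp at hUne
  | insert j s hj ih =>
    rcases s.eq_empty_or_nonempty with rfl | ⟨k₀, hk₀⟩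
    · simpa using hUne
    set B := ⋂ i ∈ s, C i
    have hB : B.Nonempty := by
      simpa only [Finset.erase_insert hj] using hdrop j (Finset.mem_insert_self j s)
    rw [Finset.set_biInter_insert, ← not_disjoint_iff_nonempty_inter]
    intro hdisj
    obtain ⟨f, u, v, hfA, huv, hfB⟩ := geometric_hahn_banach_compact_closed
      (hconv j (by simp)) (hcomp j (by simp))
      (convex_iInter₂ fun i hi => hconv i (Finset.mem_insert_of_mem hi))
      (isClosed_biInter fun i hi => (hcomp i (Finset.mem_insert_of_mem hi)).isClosed) hdisj
    set H := {x | f x = u}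
    -- Each segment from a point of `C j` to a point of `B` crosses the separating hyperplane.
    have hcross : ∀ k ∈ s, ∃ z ∈ (⋂ i ∈ s.erase k, C i) ∩ ⋃ i ∈ insert j s, C i, f z = u := by
      intro k hk
      have hjk : j ≠ k := fun h => hj (h ▸ hk)
      obtain ⟨x, hx⟩ := hdrop k (by simp [hk])
      rw [Finset.erase_insert_of_ne hjk, Finset.set_biInter_insert] at hx
      obtain ⟨y, hy⟩ := hB
      have hyC : ∀ i ∈ s, y ∈ C i := fun i hi => mem_iInter₂.mp hy i hi
      refine ((convex_iInter₂ fun i hi => hconv i ?_).inter hU).isPreconnected.intermediate_value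
        (a := x) (b := y) ⟨hx.2, mem_biUnion (by simp) hx.1⟩
        ⟨mem_iInter₂.mpr fun i hi => hyC i (Finset.mem_of_mem_erase hi),
          mem_biUnion (by simp [hk]) (hyC k hk)⟩
        f.continuous.continuousOn ⟨(hfA x hx.1).le, (huv.trans (hfB y hy)).le⟩
      simp [Finset.mem_of_mem_erase hi]
    have hCjH : C j ∩ H = ∅ :=
      eq_empty_of_forall_notMem fun x hx => (hfA x hx.1).ne hx.2
    have hsliceU : (⋃ i ∈ s, C i ∩ H) = (⋃ i ∈ insert j s, C i) ∩ H := by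
      rw [Finset.set_biUnion_insert, union_inter_distrib_right, hCjH, empty_union, iUnion₂_inter]
    obtain ⟨w, hw⟩ := ih (fun i => C i ∩ H)
      (fun i hi => (hconv i (Finset.mem_insert_of_mem hi)).inter (convex_hyperplane f.isLinear u))
      (fun i hi => (hcomp i (Finset.mem_insert_of_mem hi)).inter_right
        (isClosed_eq f.continuous continuous_const))
      (hsliceU ▸ hU.inter (convex_hyperplane f.isLinear u))
      (by obtain ⟨z, hz, hfz⟩ := hcross k₀ hk₀; exact hsliceU ▸ ⟨z, hz.2, hfz⟩)
      (fun k hk => by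
        obtain ⟨z, hz, hfz⟩ := hcross k hk
        exact ⟨z, mem_iInter₂.mpr fun i hi => ⟨mem_iInter₂.mp hz.1 i hi, hfz⟩⟩)
    have hwB : w ∈ B := mem_iInter₂.mpr fun i hi => (mem_iInter₂.mp hw i hi).1
    exact (huv.trans (hfB w hwB)).ne' (mem_iInter₂.mp hw k₀ hk₀).2

end Berge

section VariationalInequality

variable {E : Type*} [NormedAddCommGroup E] [InnerProductSpace ℝ E]

def PseudomonotoneOn (F : E → E) (K : Set E) : Prop :=
  ∀ x ∈ K, ∀ y ∈ K, 0 ≤ ⟪F x, y - x⟫ → 0 ≤ ⟪F y, y - x⟫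

def viSol (K : Set E) (F : E → E) : Set E :=
  {x ∈ K | ∀ y ∈ K, 0 ≤ ⟪F x, y - x⟫}

def mintySol (K : Set E) (F : E → E) : Set E :=
  {x ∈ K | ∀ y ∈ K, 0 ≤ ⟪F y, y - x⟫}

theorem PseudomonotoneOn.mono {F : E → E} {K L : Set E} (hF : PseudomonotoneOn F K)
    (hLK : L ⊆ K) : PseudomonotoneOn F L :=
  fun x hx y hy => hF x (hLK hx) y (hLK hy)

theorem convex_setOf_inner_sub_nonneg (v y : E) : Convex ℝ {x | 0 ≤ ⟪v, y - x⟫} := by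
  have : {x | 0 ≤ ⟪v, y - x⟫} = {x | innerₗ E v x ≤ ⟪v, y⟫} := by
    ext x; simp [inner_sub_right]
  exact this ▸ convex_halfSpace_le (innerₗ E v).isLinear _

theorem isClosed_setOf_inner_sub_nonneg (v y : E) : IsClosed {x | 0 ≤ ⟪v, y - x⟫} :=
  isClosed_le continuous_const (continuous_const.inner (continuous_const.sub continuous_id))

theorem PseudomonotoneOn.convexHull_subset_biUnion {F : E → E} {K : Set E}
    (hF : PseudomonotoneOn F K) (hK : Convex ℝ K) {t : Finset E} (ht : ↑t ⊆ K) :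
    convexHull ℝ ↑t ⊆ ⋃ y ∈ t, {x | 0 ≤ ⟪F y, y - x⟫} := by
  intro x hx
  by_contra hcover
  have hneg : ∀ y ∈ t, ⟪F y, y - x⟫ < 0 :=
    fun y hy => not_le.mp fun h => hcover (mem_biUnion hy h)
  -- Pseudomonotonicity puts `t` in the open half-space `⟪F x, · - x⟫ < 0`, whose convex hull
  -- cannot contain `x`.
  have hhalf : ↑t ⊆ {y | ⟪F x, y⟫ < ⟪F x, x⟫} := fun y hy => show ⟪F x, y⟫ < ⟪F x, x⟫ by
    have := mt (hF x (convexHull_min ht hK hx) y (ht hy)) (hneg y hy).not_ge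
    simpa only [inner_sub_right, sub_nonneg, not_le] using this
  exact lt_irrefl ⟪F x, x⟫
    (convexHull_min hhalf (convex_halfSpace_lt (innerₗ E (F x)).isLinear _) hx)

theorem PseudomonotoneOn.exists_mem_convexHull {F : E → E} {K : Set E}
    (hF : PseudomonotoneOn F K) (hK : Convex ℝ K) (t : Finset E) (ht : ↑t ⊆ K)
    (htne : t.Nonempty) : ∃ x ∈ convexHull ℝ ↑t, ∀ y ∈ t, 0 ≤ ⟪F y, y - x⟫ := by
  classical
  induction t using Finset.strongInduction with
  | H t ih =>
  set C : E → Set E := fun y => convexHull ℝ ↑t ∩ {x | 0 ≤ ⟪F y, y - x⟫}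
  have hU : (⋃ y ∈ t, C y) = convexHull ℝ ↑t := by
    simp only [C, ← inter_iUnion₂]
    exact inter_eq_left.mpr (hF.convexHull_subset_biUnion hK ht)
  have hdrop : ∀ k ∈ t, (⋂ y ∈ t.erase k, C y).Nonempty := by
    intro k hk
    rcases (t.erase k).eq_empty_or_nonempty with he | hne
    · simp [he]
    obtain ⟨x, hx, hxM⟩ := ih _ (Finset.erase_ssubset hk)
      (fun y hy => ht (Finset.mem_of_mem_erase hy)) hne
    exact ⟨x, mem_iInter₂.mpr fun y hy =>
      ⟨convexHull_mono (Finset.coe_subset.mpr (t.erase_subset k)) hx, hxM y hy⟩⟩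
  obtain ⟨x, hx⟩ := nonempty_biInter_of_convex_biUnion t C
    (fun y _ => (convex_convexHull ℝ _).inter (convex_setOf_inner_sub_nonneg _ _))
    (fun y _ => (t.finite_toSet.isCompact_convexHull (𝕜 := ℝ)).inter_right
      (isClosed_setOf_inner_sub_nonneg _ _))
    (hU ▸ convex_convexHull ℝ _)
    (hU ▸ convexHull_nonempty_iff.mpr (Finset.coe_nonempty.mpr htne)) hdrop
  obtain ⟨y₀, hy₀⟩ := htne
  exact ⟨x, (mem_iInter₂.mp hx y₀ hy₀).1, fun y hy => (mem_iInter₂.mp hx y hy).2⟩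

theorem IsCompact.mintySol_nonempty {F : E → E} {C : Set E} (hC : IsCompact C)
    (hCconv : Convex ℝ C) (hCne : C.Nonempty) (hF : PseudomonotoneOn F C) :
    (mintySol C F).Nonempty := by
  classical
  obtain ⟨c, hc⟩ := hCne
  obtain ⟨x, hxC, hx⟩ := hC.inter_iInter_nonempty (fun y : C => {x | 0 ≤ ⟪F y, y - x⟫})
    (fun y => isClosed_setOf_inner_sub_nonneg _ _) fun u => by
      obtain ⟨x, hx, hxM⟩ := hF.exists_mem_convexHull hCconv (insert c (u.image Subtype.val))
        (by simp [insert_subset_iff, hc]) (Finset.insert_nonempty _ _)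
      exact ⟨x, convexHull_min (by simp [insert_subset_iff, hc]) hCconv hx,
        mem_iInter₂.mpr fun y hy => hxM y (by simp [hy])⟩
  exact ⟨x, hxC, fun y hy => mem_iInter.mp hx ⟨y, hy⟩⟩

theorem mintySol_subset_viSol {F : E → E} {K : Set E} (hK : Convex ℝ K) (hF : Continuous F) :
    mintySol K F ⊆ viSol K F := by
  rintro x ⟨hxK, hx⟩
  refine ⟨hxK, fun y hy => ?_⟩
  -- Test the Minty inequality at `x + t • (y - x)` and let `t → 0⁺`.
  have hg : Continuous fun t : ℝ => ⟪F (x + t • (y - x)), y - x⟫ := by fun_prop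
  have hpos : Ioc (0 : ℝ) 1 ⊆ {t | 0 ≤ ⟪F (x + t • (y - x)), y - x⟫} := by
    rintro t ⟨ht0, ht1⟩
    have := hx _ (hK.add_smul_sub_mem hxK hy ⟨ht0.le, ht1⟩)
    rw [add_sub_cancel_left, real_inner_smul_right] at this
    exact nonneg_of_mul_nonneg_right this ht0
  have := (isClosed_le continuous_const hg).closure_subset_iff.mpr hpos
  have h0 := this (by rw [closure_Ioc zero_ne_one]; exact ⟨le_rfl, zero_le_one⟩)
  rwa [mem_ofPred_eq, zero_smul, add_zero] at h0

theorem mem_viSol_of_mem_viSol_inter {F : E → E} {K U : Set E} {x : E} (hK : Convex ℝ K)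
    (hU : U ∈ 𝓝 x) (hx : x ∈ viSol (K ∩ U) F) : x ∈ viSol K F := by
  refine ⟨hx.1.1, fun y hy => ?_⟩
  have hnear : ∀ᶠ t in 𝓝[>] (0 : ℝ), x + t • (y - x) ∈ U ∧ t ∈ Ioc 0 1 := by
    refine ((Continuous.tendsto (by fun_prop) 0).mono_left nhdsWithin_le_nhds).eventually
      (by simpa using hU) |>.and (Ioc_mem_nhdsGT zero_lt_one)
  obtain ⟨t, htU, ht0, ht1⟩ := hnear.exists
  have := hx.2 _ ⟨hK.add_smul_sub_mem hx.1.1 hy ⟨ht0.le, ht1⟩, htU⟩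
  rw [add_sub_cancel_left, real_inner_smul_right] at this
  exact nonneg_of_mul_nonneg_right this ht0

theorem isClosed_viSol {F : E → E} {K : Set E} (hK : IsClosed K) (hF : Continuous F) :
    IsClosed (viSol K F) := by
  have : viSol K F = K ∩ ⋂ y ∈ K, {x | 0 ≤ ⟪F x, y - x⟫} := by
    ext x; simp [viSol]
  rw [this]
  exact hK.inter (isClosed_biInter fun y _ => isClosed_le continuous_const (by fun_prop))

theorem viSol_subset_sublevel {F : E → E} {K : Set E} {x₀ : E} (hx₀ : x₀ ∈ K) :
    viSol K F ⊆ {x ∈ K | ⟪F x, x - x₀⟫ ≤ 0} := by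
  rintro x ⟨hxK, hx⟩
  refine ⟨hxK, ?_⟩
  have := hx x₀ hx₀
  rw [← neg_sub, inner_neg_right] at this
  linarith

end VariationalInequality

theorem stmt_7_general {E : Type*} [NormedAddCommGroup E] [InnerProductSpace ℝ E]
    [FiniteDimensional ℝ E]
    (K : Set E) (hKc : IsClosed K) (hKconv : Convex ℝ K)
    (F : E → E) (hF : Continuous F)
    (hpseudo : ∀ x ∈ K, ∀ y ∈ K, 0 ≤ ⟪F x, y - x⟫ → 0 ≤ ⟪F y, y - x⟫)
    (x₀ : E) (hx₀ : x₀ ∈ K)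
    (hbdd : Bornology.IsBounded {x ∈ K | ⟪F x, x - x₀⟫ ≤ 0}) :
    {x ∈ K | ∀ y ∈ K, 0 ≤ ⟪F x, y - x⟫}.Nonempty ∧
      IsCompact {x ∈ K | ∀ y ∈ K, 0 ≤ ⟪F x, y - x⟫} := by
  change (viSol K F).Nonempty ∧ IsCompact (viSol K F)
  obtain ⟨r, hr0, hr⟩ := hbdd.subset_closedBall_lt 0 x₀
  set C := K ∩ Metric.closedBall x₀ (r + 1)
  have hCconv : Convex ℝ C := hKconv.inter (convex_closedBall x₀ _)
  have hx₀C : x₀ ∈ C := ⟨hx₀, Metric.mem_closedBall_self (by linarith)⟩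
  obtain ⟨x, hxM⟩ := ((isCompact_closedBall x₀ _).inter_left hKc).mintySol_nonempty hCconv
    ⟨x₀, hx₀C⟩ (PseudomonotoneOn.mono hpseudo inter_subset_left)
  have hxC : x ∈ viSol C F := mintySol_subset_viSol hCconv hF hxM
  have hxr : dist x x₀ ≤ r := hr ⟨hxC.1.1, (viSol_subset_sublevel hx₀C hxC).2⟩
  refine ⟨⟨x, mem_viSol_of_mem_viSol_inter hKconv
    (Metric.closedBall_mem_nhds_of_mem (by rw [Metric.mem_ball]; linarith)) hxC⟩, ?_⟩
  exact Metric.isCompact_of_isClosed_isBounded (isClosed_viSol hKc hF)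
    (hbdd.subset (viSol_subset_sublevel hx₀))

theorem stmt_7 {E : Type*} [NormedAddCommGroup E] [InnerProductSpace ℝ E]
    [FiniteDimensional ℝ E]
    (K : Set E) (hK : K.Nonempty) (hKc : IsClosed K) (hKconv : Convex ℝ K)
    (F : E → E) (hF : Continuous F)
    (hpseudo : ∀ x ∈ K, ∀ y ∈ K, 0 ≤ ⟪F x, y - x⟫ → 0 ≤ ⟪F y, y - x⟫)
    (x₀ : E) (hx₀ : x₀ ∈ K)
    (hbdd : Bornology.IsBounded {x ∈ K | ⟪F x, x - x₀⟫ ≤ 0}) :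
    {x ∈ K | ∀ y ∈ K, 0 ≤ ⟪F x, y - x⟫}.Nonempty ∧
      IsCompact {x ∈ K | ∀ y ∈ K, 0 ≤ ⟪F x, y - x⟫} :=
  stmt_7_general K hKc hKconv F hF hpseudo x₀ hx₀ hbdd
end

section
/- Let C₀ ⊆ ℝᵐ be an open convex set and F : ℝᵐ → ℝᵐ continuously differentiable and pseudomonotone on C₀ with symmetric Jacobian DF(x) for every x ∈ C₀. Let P ∈ ℝ^{m×m} be an orthogonal projection matrix (Pᵀ = P, P² = P) and let I = {i | P_{ii} > 0}. Assume: (i) the principal submatrix of P indexed by I is strictly diagonally dominant, i.e. P_{ii} > ∑_{j∈I, j≠i} |P_{ij}| for every i ∈ I; (ii) for every x ∈ C₀ and every i ∉ I, the i-th row of DF(x) and the i-th row of P are zero. Let s > 0 satisfy, for every x ∈ C₀ and every i ∈ I: s > −(DF(x))_{ii} and s·(P_{ii} − ∑_{j≠i} |P_{ij}|) > ∑_{j≠i} |(DF(x))_{ij}| − (DF(x))_{ii}. Then DF(x) + s·P is positive semidefinite for every x ∈ C₀, and the map x ↦ F(x) + s · P x is monotone on C₀: ⟪(F(x) + s·Px)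 − (F(y) + s·Py), x − y⟫ ≥ 0 for all x, y ∈ C₀. -/
open Matrix Finset

/-!
The Jacobian `DF(x) + s P` of `x ↦ F x + s P x` is symmetric and, row by row, weakly diagonally
dominant: rows outside `I` vanish, and on rows in `I` the choice of `s` makes the diagonal beat
the off-diagonal mass. By Gershgorin's theorem its eigenvalues are nonnegative, so it is positive
semidefinite. A map whose derivative is positive semidefinite along every segment of a convex set
is monotone there: `t ↦ ⟪G (y + t (x - y)), x - y⟫` has nonnegative derivative on `[0, 1]`.
-/

theorem Matrix.IsHermitian.posSemidef_of_sum_abs_le_diag {n : Type*} [Fintype n] [DecidableEq n]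
    {A : Matrix n n ℝ} (hA : A.IsHermitian) (hdom : ∀ i, ∑ j ∈ univ.erase i, |A i j| ≤ A i i) :
    A.PosSemidef := by
  refine hA.posSemidef_iff_eigenvalues_nonneg.2 fun i => ?_
  have hμ : Module.End.HasEigenvalue (toLin' A) (hA.eigenvalues i) :=
    Module.End.hasEigenvalue_iff_mem_spectrum.2 <| by
      rw [spectrum_toLin']
      exact hA.eigenvalues_mem_spectrum_real i
  obtain ⟨k, hk⟩ := eigenvalue_mem_ball hμ
  rw [Metric.mem_closedBall, Real.dist_eq] at hk
  simp only [Real.norm_eq_abs] at hk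
  rw [Pi.zero_apply]
  linarith [neg_abs_le (hA.eigenvalues i - A k k), hdom k]

theorem Matrix.sum_erase_abs_add_smul_le {n : Type*} [Fintype n] [DecidableEq n]
    (A B : Matrix n n ℝ) {s : ℝ} (hs : 0 ≤ s) (i : n) :
    ∑ j ∈ univ.erase i, |(A + s • B) i j| ≤
      ∑ j ∈ univ.erase i, |A i j| + s * ∑ j ∈ univ.erase i, |B i j| := by
  rw [mul_sum, ← sum_add_distrib]
  gcongr with j
  exact (abs_add_le _ _).trans_eq <| by
    rw [Matrix.smul_apply, smul_eq_mul, abs_mul, abs_of_nonneg hs]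

theorem dotProduct_sub_nonneg_of_hasFDerivAt {ι : Type*} [Fintype ι] {C : Set (ι → ℝ)}
    (hC : Convex ℝ C) {G : (ι → ℝ) → ι → ℝ} {G' : (ι → ℝ) → (ι → ℝ) →L[ℝ] ι → ℝ}
    (hG : ∀ z ∈ C, HasFDerivAt G (G' z) z) (hG' : ∀ z ∈ C, ∀ u, 0 ≤ u ⬝ᵥ G' z u)
    {x y : ι → ℝ} (hx : x ∈ C) (hy : y ∈ C) : 0 ≤ (G x - G y) ⬝ᵥ (x - y) := by
  set γ := AffineMap.lineMap (k := ℝ) y x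
  have hγC : ∀ t ∈ Set.Icc (0 : ℝ) 1, γ t ∈ C := fun t ht => hC.lineMap_mem hy hx ht
  have hderiv : ∀ t ∈ Set.Icc (0 : ℝ) 1,
      HasDerivAt (fun t => G (γ t) ⬝ᵥ (x - y)) (G' (γ t) (x - y) ⬝ᵥ (x - y)) t := by
    intro t ht
    have hGγ := (hG _ (hγC t ht)).comp_hasDerivAt t AffineMap.hasDerivAt_lineMap
    exact HasDerivAt.fun_sum fun i _ => (hasDerivAt_pi.1 hGγ i).mul_const _
  have hmono : MonotoneOn (fun t => G (γ t) ⬝ᵥ (x - y)) (Set.Icc 0 1) := by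
    refine monotoneOn_of_hasDerivWithinAt_nonneg (convex_Icc 0 1)
      (fun t ht => (hderiv t ht).continuousAt.continuousWithinAt)
      (fun t ht => (hderiv t (interior_subset ht)).hasDerivWithinAt) fun t ht => ?_
    rw [dotProduct_comm]
    exact hG' _ (hγC t (interior_subset ht)) _
  have h01 := hmono (Set.left_mem_Icc.2 zero_le_one) (Set.right_mem_Icc.2 zero_le_one) zero_le_one
  simp only [γ, AffineMap.lineMap_apply_zero, AffineMap.lineMap_apply_one] at h01
  rw [sub_dotProduct]
  linarith

theorem stmt_17_general {m : ℕ} (C₀ : Set (Fin m → ℝ)) (hconv : Convex ℝ C₀)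
    (F : (Fin m → ℝ) → (Fin m → ℝ)) (hF : ContDiff ℝ 1 F)
    (J : (Fin m → ℝ) → Matrix (Fin m) (Fin m) ℝ)
    (hJ : ∀ x ∈ C₀, ∀ u : Fin m → ℝ, (J x).mulVec u = fderiv ℝ F x u)
    (hsym : ∀ x ∈ C₀, (J x).IsHermitian)
    (P : Matrix (Fin m) (Fin m) ℝ) (hP1 : Pᵀ = P)
    (hzero : ∀ x ∈ C₀, ∀ i : Fin m, ¬ 0 < P i i → (∀ j, J x i j = 0) ∧ (∀ j, P i j = 0))
    (s : ℝ) (hs0 : 0 < s)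
    (hs2 : ∀ x ∈ C₀, ∀ i : Fin m, 0 < P i i →
      ∑ j ∈ Finset.univ.erase i, |J x i j| - J x i i <
        s * (P i i - ∑ j ∈ Finset.univ.erase i, |P i j|)) :
    (∀ x ∈ C₀, (J x + s • P).PosSemidef) ∧
    (∀ x ∈ C₀, ∀ y ∈ C₀,
      0 ≤ ∑ i, ((F x i + s * P.mulVec x i) - (F y i + s * P.mulVec y i)) * (x i - y i)) := by
  have hpsd : ∀ x ∈ C₀, (J x + s • P).PosSemidef := by
    intro x hx
    have hherm : (J x + s • P).IsHermitian :=
      (hsym x hx).add ((isHermitian_iff_isSymm.2 hP1).smul (IsSelfAdjoint.all s))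
    refine hherm.posSemidef_of_sum_abs_le_diag fun i => ?_
    by_cases hPi : 0 < P i i
    · have hdiag : (J x + s • P) i i = J x i i + s * P i i := rfl
      linarith [sum_erase_abs_add_smul_le (J x) P hs0.le i, hs2 x hx i hPi]
    · obtain ⟨hJrow, hProw⟩ := hzero x hx i hPi
      simp [hJrow, hProw]
  refine ⟨hpsd, fun x hx y hy => ?_⟩
  have hG : ∀ z ∈ C₀, HasFDerivAt (fun x => F x + s • P *ᵥ x)
      (fderiv ℝ F z + s • LinearMap.toContinuousLinearMap (mulVecLin P)) z := fun z _ =>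
    (hF.differentiable one_ne_zero z).hasFDerivAt.add
      ((LinearMap.toContinuousLinearMap (mulVecLin P)).hasFDerivAt.const_smul s)
  refine dotProduct_sub_nonneg_of_hasFDerivAt hconv hG (fun z hz u => ?_) hx hy
  simpa [add_mulVec, smul_mulVec, hJ z hz] using (hpsd z hz).dotProduct_mulVec_nonneg u

theorem stmt_17 {m : ℕ} (C₀ : Set (Fin m → ℝ)) (hopen : IsOpen C₀) (hconv : Convex ℝ C₀)
    (F : (Fin m → ℝ) → (Fin m → ℝ)) (hF : ContDiff ℝ 1 F)
    (hpseudo : ∀ x ∈ C₀, ∀ y ∈ C₀,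
      0 ≤ ∑ i, F x i * (y i - x i) → 0 ≤ ∑ i, F y i * (y i - x i))
    (J : (Fin m → ℝ) → Matrix (Fin m) (Fin m) ℝ)
    (hJ : ∀ x ∈ C₀, ∀ u : Fin m → ℝ, (J x).mulVec u = fderiv ℝ F x u)
    (hsym : ∀ x ∈ C₀, (J x).IsHermitian)
    (P : Matrix (Fin m) (Fin m) ℝ) (hP1 : Pᵀ = P) (hP2 : P * P = P)
    (hPdd : ∀ i : Fin m, 0 < P i i →
      ∑ j ∈ (Finset.univ.filter fun j => 0 < P j j).erase i, |P i j| < P i i)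
    (hzero : ∀ x ∈ C₀, ∀ i : Fin m, ¬ 0 < P i i → (∀ j, J x i j = 0) ∧ (∀ j, P i j = 0))
    (s : ℝ) (hs0 : 0 < s)
    (hs1 : ∀ x ∈ C₀, ∀ i : Fin m, 0 < P i i → -(J x i i) < s)
    (hs2 : ∀ x ∈ C₀, ∀ i : Fin m, 0 < P i i →
      ∑ j ∈ Finset.univ.erase i, |J x i j| - J x i i <
        s * (P i i - ∑ j ∈ Finset.univ.erase i, |P i j|)) :
    (∀ x ∈ C₀, (J x + s • P).PosSemidef) ∧
    (∀ x ∈ C₀, ∀ y ∈ C₀,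
      0 ≤ ∑ i, ((F x i + s * P.mulVec x i) - (F y i + s * P.mulVec y i)) * (x i - y i)) :=
  stmt_17_general C₀ hconv F hF J hJ hsym P hP1 hzero s hs0 hs2
end
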